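/- arXiv:2307.11379 — 2 statements merged into one kernel-verified Lean document; each statement's English description precedes it below -/
import Mathlib

section
/- For real numbers a, b in [-1,1], define EOD' = 1 - |b|, AOD' = 1 - |a - b|/2, ERD' = 1 - |a + b|/2. Then there always exists X ∈ {EOD', AOD', ERD'} with EOD' + AOD' + ERD' = 1 + 2·X. -/
theorem stmt_0 (a b : ℝ) (ha : a ∈ Set.Icc (-1 : ℝ) 1) (hb : b ∈ Set.Icc (-1 : ℝ) 1) :
    ∃ X ∈ ({1 - |b|, 1 - |a - b| / 2, 1 - |a + b| / 2} : Set ℝ),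
      (1 - |b|) + (1 - |a - b| / 2) + (1 - |a + b| / 2) = 1 + 2 * X := by
  rcases le_total |a| |b| with h | h
  · refine ⟨1 - |b|, by simp, ?_⟩
    rcases abs_cases a with ⟨ha1, ha2⟩ | ⟨ha1, ha2⟩ <;>
    rcases abs_cases b with ⟨hb1, hb2⟩ | ⟨hb1, hb2⟩ <;>
    rcases abs_cases (a - b) with ⟨h1, h2⟩ | ⟨h1, h2⟩ <;>
    rcases abs_cases (a + b) with ⟨h3, h4⟩ | ⟨h3, h4⟩ <;> linarith
  · rcases le_total 0 a with ha0 | ha0 <;> rcases le_total 0 b with hb0 | hb0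
    · refine ⟨1 - |a + b| / 2, by simp, ?_⟩
      rw [abs_of_nonneg ha0, abs_of_nonneg hb0] at h
      rw [abs_of_nonneg hb0]
      rcases abs_cases (a - b) with ⟨h1, h2⟩ | ⟨h1, h2⟩ <;>
      rcases abs_cases (a + b) with ⟨h3, h4⟩ | ⟨h3, h4⟩ <;> linarith
    · refine ⟨1 - |a - b| / 2, by simp, ?_⟩
      rw [abs_of_nonneg ha0, abs_of_nonpos hb0] at h
      rw [abs_of_nonpos hb0]
      rcases abs_cases (a - b) with ⟨h1, h2⟩ | ⟨h1, h2⟩ <;>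
      rcases abs_cases (a + b) with ⟨h3, h4⟩ | ⟨h3, h4⟩ <;> linarith
    · refine ⟨1 - |a - b| / 2, by simp, ?_⟩
      rw [abs_of_nonpos ha0, abs_of_nonneg hb0] at h
      rw [abs_of_nonneg hb0]
      rcases abs_cases (a - b) with ⟨h1, h2⟩ | ⟨h1, h2⟩ <;>
      rcases abs_cases (a + b) with ⟨h3, h4⟩ | ⟨h3, h4⟩ <;> linarith
    · refine ⟨1 - |a + b| / 2, by simp, ?_⟩
      rw [abs_of_nonpos ha0, abs_of_nonpos hb0] at h
      rw [abs_of_nonpos hb0]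
      rcases abs_cases (a - b) with ⟨h1, h2⟩ | ⟨h1, h2⟩ <;>
      rcases abs_cases (a + b) with ⟨h3, h4⟩ | ⟨h3, h4⟩ <;> linarith
end

section
/- For real numbers a, b ∈ [−1, 1], defining M_a = 1 − |a| and M_b = 1 − |b|, AOD' = 1 − |a − b|/2, ERD' = 1 − |a + b|/2, we have AOD' + ERD' = 2 − (|a−b| + |a+b|)/2 = 2 − max(|a|, |b|), and hence M_a + M_b = 2 − |a| − |b| ≤ AOD' + ERD' (equivalently (M_a + M_b)/2 ≤ (AOD' + ERD')/2), with equality if and only if min(|a|, |b|) = 0. -/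
theorem stmt_9 (a b : ℝ) (ha : a ∈ Set.Icc (-1 : ℝ) 1) (hb : b ∈ Set.Icc (-1 : ℝ) 1) :
    (1 - |a - b| / 2) + (1 - |a + b| / 2) = 2 - max |a| |b| ∧
      (1 - |a|) + (1 - |b|) ≤ (1 - |a - b| / 2) + (1 - |a + b| / 2) ∧
      ((1 - |a|) + (1 - |b|) = (1 - |a - b| / 2) + (1 - |a + b| / 2) ↔
        min |a| |b| = 0) := by
  have key : |a - b| + |a + b| = 2 * max |a| |b| := by
    rcases le_total |a| |b| with h|h
    · rw [max_eq_right h]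
      cases abs_cases (a-b) <;> cases abs_cases (a+b) <;> cases abs_cases a <;> cases abs_cases b <;> linarith
    · rw [max_eq_left h]
      cases abs_cases (a-b) <;> cases abs_cases (a+b) <;> cases abs_cases a <;> cases abs_cases b <;> linarith
  constructor
  · linarith
  constructor
  · have := abs_nonneg a; have := abs_nonneg b
    rcases max_cases |a| |b| with ⟨h1,h2⟩|⟨h1,h2⟩ <;> linarith
  · constructor
    · intro h
      rcases max_cases |a| |b| with ⟨h1,h2⟩|⟨h1,h2⟩
      · have : |b| = 0 := by linarith
        simp [min_eq_right h2, this]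
      · have : |a| = 0 := by linarith
        simp [this, abs_nonneg b]
    · intro h
      rcases min_cases |a| |b| with ⟨h1,h2⟩|⟨h1,h2⟩ <;> rw [h1] at h
      · have ha0 : a = 0 := abs_eq_zero.mp h
        simp [ha0]; ring
      · have hb0 : b = 0 := abs_eq_zero.mp h
        simp [hb0]; ring
end
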